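/- Let G be the group with presentation ⟨a, b ∣ a² = b²⟩ and let w : Fin 4 → (ZMod 2) × (ZMod 2) be a length-4 word lying in F¹¹ ∩ F⁰¹. Then the product dec(w 0) * dec(w 1) * dec(w 2) * dec(w 3) is the identity of G if and only if w is 01-balanced and (w is 11-constant or syl(w 0, w 1) ≠ syl(w 2, w 3)). (This is the correctness of the three-query procedure, using the syllable function as third query, solving the word problem for length-4 words in G under the promise that w ∈ F¹¹ ∩ F⁰¹.) -/
import Mathlib


/-- Generalized parity `pˣ` of `y ∈ (ZMod 2) × (ZMod 2)`:
`0` if `y ∈ {00, x}` and `1` otherwise. -/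
def genParity (x y : ZMod 2 × ZMod 2) : ZMod 2 :=
  if y = (0, 0) ∨ y = x then 0 else 1

/-- A length-4 word `w` is `x`-constant if `pˣ(w i)` takes the same value
for all `i`. -/
def IsXConstant (x : ZMod 2 × ZMod 2) (w : Fin 4 → ZMod 2 × ZMod 2) : Prop :=
  ∀ i j : Fin 4, genParity x (w i) = genParity x (w j)

/-- A length-4 word `w` is `x`-balanced if exactly 2 of the 4 indices `i`
satisfy `pˣ(w i) = 1`. -/
def IsXBalanced (x : ZMod 2 × ZMod 2) (w : Fin 4 → ZMod 2 × ZMod 2) : Prop :=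
  (Finset.univ.filter fun i : Fin 4 => genParity x (w i) = 1).card = 2

/-- The set `Fˣ` of `x`-feasible words of length 4: `x`-constant or `x`-balanced. -/
def feasible (x : ZMod 2 × ZMod 2) : Set (Fin 4 → ZMod 2 × ZMod 2) :=
  {w | IsXConstant x w ∨ IsXBalanced x w}

/-- The single relator `a * a * b⁻¹ * b⁻¹` presenting `⟨a, b ∣ a² = b²⟩`. -/
def rels : Set (FreeGroup (Fin 2)) :=
  {FreeGroup.of 0 * FreeGroup.of 0 * (FreeGroup.of 1)⁻¹ * (FreeGroup.of 1)⁻¹}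

/-- The group `G = ⟨a, b ∣ a² = b²⟩`. -/
abbrev G := PresentedGroup rels

/-- The images `α`, `β` of the generators in `G`. -/
def α : G := PresentedGroup.of 0
def β : G := PresentedGroup.of 1

/-- Decoding of the paired alphabet `{a, b, B = b⁻¹, A = a⁻¹}` into `G`:
`dec 00 = α`, `dec 01 = β`, `dec 10 = β⁻¹`, `dec 11 = α⁻¹`. -/
def dec (y : ZMod 2 × ZMod 2) : G :=
  if y = (0, 0) then α
  else if y = (0, 1) then β
  else if y = (1, 0) then β⁻¹
  else α⁻¹

/-- The syllable function: 0-syllables are `AA, BB, Aa, aA, Ab, AB, ab, aB`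
and 1-syllables are `aa, bb, Bb, bB, bA, BA, ba, Ba`. -/
def syl (u v : ZMod 2 × ZMod 2) : ZMod 2 :=
  if (u, v) = (((1 : ZMod 2), (1 : ZMod 2)), ((1 : ZMod 2), (1 : ZMod 2)))
    ∨ (u, v) = ((1, 0), (1, 0)) ∨ (u, v) = ((1, 1), (0, 0))
    ∨ (u, v) = ((0, 0), (1, 1)) ∨ (u, v) = ((1, 1), (0, 1))
    ∨ (u, v) = ((1, 1), (1, 0)) ∨ (u, v) = ((0, 0), (0, 1))
    ∨ (u, v) = ((0, 0), (1, 0))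
  then 0 else 1


/- Auxiliary machinery -/

instance (x : ZMod 2 × ZMod 2) (w : Fin 4 → ZMod 2 × ZMod 2) :
    Decidable (IsXConstant x w) := by unfold IsXConstant; infer_instance

instance (x : ZMod 2 × ZMod 2) (w : Fin 4 → ZMod 2 × ZMod 2) :
    Decidable (IsXBalanced x w) := by unfold IsXBalanced; infer_instance

lemma dec00 : dec (0,0) = α := rfl
lemma dec01 : dec (0,1) = β := rfl
lemma dec10 : dec (1,0) = β⁻¹ := rfl
lemma dec11 : dec (1,1) = α⁻¹ := rfl

lemma hrel : α * α * β⁻¹ * β⁻¹ = 1 := by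
  have h : (FreeGroup.of 0 * FreeGroup.of 0 * (FreeGroup.of 1)⁻¹ * (FreeGroup.of 1)⁻¹ :
      FreeGroup (Fin 2)) ∈ Subgroup.normalClosure rels :=
    Subgroup.subset_normalClosure rfl
  exact (QuotientGroup.eq_one_iff _).mpr h

lemma h1 : α * α = β * β := by
  calc α * α = (α * α * β⁻¹ * β⁻¹) * (β * β) := by group
  _ = β * β := by rw [hrel]; group

lemma h2 : α⁻¹ * α⁻¹ = β⁻¹ * β⁻¹ := by
  have : (α * α)⁻¹ = (β * β)⁻¹ := by rw [h1]
  simpa [mul_inv_rev] using this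

lemma h1x (x : G) : α * (α * x) = β * (β * x) := by
  rw [← mul_assoc, ← mul_assoc, h1]

lemma h2x (x : G) : α⁻¹ * (α⁻¹ * x) = β⁻¹ * (β⁻¹ * x) := by
  rw [← mul_assoc, ← mul_assoc, h2]

noncomputable def ψ : G →* QuaternionGroup 2 :=
  PresentedGroup.toGroup (f := ![QuaternionGroup.xa 0, QuaternionGroup.a 1])
    (by intro r hr; simp only [rels, Set.mem_singleton_iff] at hr; subst hr
        simp only [map_mul, map_inv, FreeGroup.lift_apply_of]
        decide)

lemma psia : ψ α = QuaternionGroup.xa 0 := PresentedGroup.toGroup.of _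
lemma psib : ψ β = QuaternionGroup.a 1 := PresentedGroup.toGroup.of _

noncomputable def φ : G →* Multiplicative ℤ :=
  PresentedGroup.toGroup (f := fun _ => Multiplicative.ofAdd 1)
    (by intro r hr; simp only [rels, Set.mem_singleton_iff] at hr; subst hr
        simp only [map_mul, map_inv, FreeGroup.lift_apply_of]
        group)

lemma phia : φ α = Multiplicative.ofAdd 1 := PresentedGroup.toGroup.of _
lemma phib : φ β = Multiplicative.ofAdd 1 := PresentedGroup.toGroup.of _

/-- Correctness of the three-query procedure (using the syllable function as
third query) solving the word problem for length-4 words in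
`G = ⟨a, b ∣ a² = b²⟩`, under the promise `w ∈ F¹¹ ∩ F⁰¹`. -/
theorem word_problem_a2_eq_b2 (w : Fin 4 → ZMod 2 × ZMod 2)
    (hw : w ∈ feasible (1, 1) ∩ feasible (0, 1)) :
    dec (w 0) * dec (w 1) * dec (w 2) * dec (w 3) = 1 ↔
      IsXBalanced (0, 1) w ∧
        (IsXConstant (1, 1) w ∨ syl (w 0) (w 1) ≠ syl (w 2) (w 3)) := by
  simp only [feasible, Set.mem_inter_iff, Set.mem_setOf_eq] at hw
  obtain ⟨v0, v1, v2, v3, rfl⟩ : ∃ v0 v1 v2 v3, w = ![v0, v1, v2, v3] :=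
    ⟨w 0, w 1, w 2, w 3, by funext i; fin_cases i <;> rfl⟩
  simp only [Matrix.cons_val_zero, Matrix.cons_val_one, Matrix.head_cons,
    Matrix.cons_val_two, Matrix.tail_cons, Matrix.cons_val_three]
  have hv : ∀ v : ZMod 2 × ZMod 2, v = (0,0) ∨ v = (0,1) ∨ v = (1,0) ∨ v = (1,1) := by decide
  rcases hv v0 with rfl | rfl | rfl | rfl <;>
    rcases hv v1 with rfl | rfl | rfl | rfl <;>
    rcases hv v2 with rfl | rfl | rfl | rfl <;>
    rcases hv v3 with rfl | rfl | rfl | rfl <;>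
    simp only [dec00, dec01, dec10, dec11] <;>
    first
    | exact absurd hw (by decide)
    | (refine iff_of_true ?_ (by decide);
       simp only [mul_assoc];
       first
       | (group; done)
       | (rw [h1x]; group; done) | (rw [h1]; group; done)
       | (rw [← h1x]; group; done) | (rw [← h1]; group; done)
       | (rw [h2x]; group; done) | (rw [h2]; group; done)
       | (rw [← h2x]; group; done) | (rw [← h2]; group; done))
    | (refine iff_of_false (fun h => absurd (congrArg φ h) ?_) (by decide);
       simp only [map_mul, map_inv, map_one, phia, phib];
       decide)
    | (refine iff_of_false (fun h => absurd (congrArg ψ h) ?_) (by decide);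
       simp only [map_mul, map_inv, map_one, psia, psib];
       decide)
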